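/- arXiv:1905.10259 — 3 statements merged into one kernel-verified Lean document; each statement's English description precedes it below -/
import Mathlib

section
/- For any 0 ≤ q ≤ p < 1, the supremum over C > 0 of Δ(C, q, p) := -ln(1 - p(1 - e^{-C})) - C·q equals kl(q‖p), where kl(q‖p) = q ln(q/p) + (1-q) ln((1-q)/(1-p)) is the Kullback–Leibler divergence between Bernoulli distributions (with the conventions 0·ln 0 = 0 and kl(0‖0) = 0). -/
/-- Binary Kullback-Leibler divergence (with the conventions `0 ln 0 = 0`,
`kl(0‖0) = 0`, via Lean's `log 0 = 0` and `x / 0 = 0`). -/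
noncomputable def klBin (q p : ℝ) : ℝ :=
  q * Real.log (q / p) + (1 - q) * Real.log ((1 - q) / (1 - p))

noncomputable def Δ (C q p : ℝ) : ℝ :=
  -Real.log (1 - p * (1 - Real.exp (-C))) - C * q

lemma delta_le (q p : ℝ) (hq : 0 ≤ q) (hqp : q ≤ p) (hp : p < 1)
    {C : ℝ} (hC : 0 < C) : Δ C q p ≤ klBin q p := by
  have hp0 : 0 ≤ p := le_trans hq hqp
  have ht : 0 < Real.exp (-C) := Real.exp_pos _
  have ht1 : Real.exp (-C) < 1 := by
    rw [Real.exp_lt_one_iff]; linarith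
  set t := Real.exp (-C) with ht_def
  have hlogt : Real.log t = -C := Real.log_exp _
  have hs : 0 < 1 - p * (1 - t) := by nlinarith
  have hs_ge : 1 - p ≤ 1 - p * (1 - t) := by nlinarith
  set s := 1 - p * (1 - t) with hs_def
  have hΔ : Δ C q p = q * Real.log t - Real.log s := by
    simp only [Δ, ← ht_def, ← hs_def]; rw [hlogt]; ring
  rw [hΔ]
  rcases eq_or_lt_of_le hq with hq0 | hq0
  · -- q = 0
    subst hq0
    simp only [klBin, zero_mul, sub_zero, one_mul, zero_add]
    rw [Real.log_div one_ne_zero (by linarith), Real.log_one]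
    have hlog := Real.log_le_log (by linarith : (0:ℝ) < 1 - p) hs_ge
    linarith
  · -- 0 < q
    have hq1 : q < 1 := lt_of_le_of_lt hqp hp
    have hp0' : 0 < p := lt_of_lt_of_le hq0 hqp
    have hA : 0 < p * t / q := by positivity
    have hB : 0 < (1 - p) / (1 - q) := by
      apply div_pos <;> linarith
    have hq1' : (1 : ℝ) - q ≠ 0 := by linarith
    have e0 : q * (p * t / q) = p * t := by field_simp
    have e0' : (1 - q) * ((1 - p) / (1 - q)) = 1 - p := by field_simp
    have hsum : q * (p * t / q) + (1 - q) * ((1 - p) / (1 - q)) = s := by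
      rw [e0, e0', hs_def]; ring
    have h1 : Real.log (p * t / q / s) ≤ p * t / q / s - 1 :=
      Real.log_le_sub_one_of_pos (by positivity)
    have h2 : Real.log ((1 - p) / (1 - q) / s) ≤ (1 - p) / (1 - q) / s - 1 :=
      Real.log_le_sub_one_of_pos (by positivity)
    have e1 : Real.log (p * t / q / s) = Real.log p + Real.log t - Real.log q - Real.log s := by
      rw [Real.log_div (by positivity) (ne_of_gt hs), Real.log_div (by positivity) (ne_of_gt hq0),
        Real.log_mul (ne_of_gt hp0') (ne_of_gt ht)]
    have e2 : Real.log ((1 - p) / (1 - q) / s) = Real.log (1 - p) - Real.log (1 - q) - Real.log s := by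
      rw [Real.log_div (by positivity) (ne_of_gt hs), Real.log_div (by linarith) (by linarith)]
    have key : q * (Real.log p + Real.log t - Real.log q - Real.log s)
        + (1 - q) * (Real.log (1 - p) - Real.log (1 - q) - Real.log s) ≤ 0 := by
      rw [← e1, ← e2]
      have c1 : q * Real.log (p * t / q / s) ≤ q * (p * t / q / s - 1) :=
        mul_le_mul_of_nonneg_left h1 hq
      have c2 : (1 - q) * Real.log ((1 - p) / (1 - q) / s) ≤ (1 - q) * ((1 - p) / (1 - q) / s - 1) :=
        mul_le_mul_of_nonneg_left h2 (by linarith)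
      have crhs : q * (p * t / q / s - 1) + (1 - q) * ((1 - p) / (1 - q) / s - 1) = 0 := by
        have : q * (p * t / q / s) + (1 - q) * ((1 - p) / (1 - q) / s)
            = (q * (p * t / q) + (1 - q) * ((1 - p) / (1 - q))) / s := by ring
        rw [hsum] at this
        rw [div_self (ne_of_gt hs)] at this
        linarith
      linarith
    have ekl : klBin q p = q * (Real.log q - Real.log p)
        + (1 - q) * (Real.log (1 - q) - Real.log (1 - p)) := by
      rw [klBin, Real.log_div (ne_of_gt hq0) (ne_of_gt hp0'),
        Real.log_div (by linarith) (by linarith)]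
    rw [ekl]
    nlinarith [key]

lemma delta_attain (q p : ℝ) (hq : 0 < q) (hqp : q < p) (hp : p < 1) :
    ∃ C : ℝ, 0 < C ∧ Δ C q p = klBin q p := by
  have hq1 : q < 1 := hqp.trans hp
  have hp0 : 0 < p := hq.trans hqp
  set t := q * (1 - p) / (p * (1 - q)) with ht_def
  have ht : 0 < t := div_pos (mul_pos hq (by linarith)) (mul_pos hp0 (by linarith))
  have ht1 : t < 1 := by
    rw [ht_def, div_lt_one (mul_pos hp0 (by linarith))]; nlinarith
  refine ⟨-Real.log t, ?_, ?_⟩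
  · have := Real.log_neg ht ht1; linarith
  · have hexp : Real.exp (-(-Real.log t)) = t := by rw [neg_neg, Real.exp_log ht]
    rw [Δ, hexp]
    have hne1 : (1 : ℝ) - q ≠ 0 := by linarith
    have hne2 : p ≠ 0 := hp0.ne'
    have hs : 1 - p * (1 - t) = (1 - p) / (1 - q) := by
      rw [ht_def]; field_simp; ring
    rw [hs]
    have l1 : Real.log t = Real.log q + Real.log (1 - p) - (Real.log p + Real.log (1 - q)) := by
      rw [ht_def, Real.log_div (ne_of_gt (mul_pos hq (by linarith)))
        (ne_of_gt (mul_pos hp0 (by linarith))),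
        Real.log_mul hq.ne' (by linarith), Real.log_mul hp0.ne' (by linarith)]
    have l2 : Real.log ((1 - p) / (1 - q)) = Real.log (1 - p) - Real.log (1 - q) :=
      Real.log_div (by linarith) (by linarith)
    have l3 : klBin q p = q * (Real.log q - Real.log p)
        + (1 - q) * (Real.log (1 - q) - Real.log (1 - p)) := by
      rw [klBin, Real.log_div hq.ne' hp0.ne', Real.log_div (by linarith) (by linarith)]
    rw [l2, l3, l1]; ring

/-- For `0 ≤ q ≤ p < 1`, `sup_{C>0} Δ(C,q,p) = kl(q‖p)`. -/
theorem statement2 (q p : ℝ) (hq : 0 ≤ q) (hqp : q ≤ p) (hp : p < 1) :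
    sSup {y : ℝ | ∃ C : ℝ, 0 < C ∧ y = Δ C q p} = klBin q p := by
  set S := {y : ℝ | ∃ C : ℝ, 0 < C ∧ y = Δ C q p} with hS
  have hmem : ∀ C : ℝ, 0 < C → Δ C q p ∈ S := fun C hC => ⟨C, hC, rfl⟩
  have hne : S.Nonempty := ⟨Δ 1 q p, hmem 1 one_pos⟩
  have hub : ∀ y ∈ S, y ≤ klBin q p := by
    rintro y ⟨C, hC, rfl⟩; exact delta_le q p hq hqp hp hC
  have hbdd : BddAbove S := ⟨klBin q p, hub⟩
  have h1 : sSup S ≤ klBin q p := csSup_le hne hub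
  have h2 : klBin q p ≤ sSup S := by
    rcases eq_or_lt_of_le hq with hq0 | hq0
    · -- q = 0 : take C → ∞
      subst hq0
      have hp1 : (0:ℝ) < 1 - p := by linarith
      have hkl : klBin 0 p = -Real.log (1 - p) := by
        simp [klBin, one_div, Real.log_inv]
      have h0 : Filter.Tendsto (fun C : ℝ => Real.exp (-C)) Filter.atTop (nhds 0) :=
        Real.tendsto_exp_atBot.comp Filter.tendsto_neg_atTop_atBot
      have hinner : Filter.Tendsto (fun C : ℝ => 1 - p * (1 - Real.exp (-C)))
          Filter.atTop (nhds (1 - p)) := by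
        have h1' : Filter.Tendsto (fun C : ℝ => p * (1 - Real.exp (-C)))
            Filter.atTop (nhds (p * (1 - 0))) := (tendsto_const_nhds.sub h0).const_mul p
        have := h1'.const_sub 1
        simpa using this
      have hlog : Filter.Tendsto (fun C : ℝ => Real.log (1 - p * (1 - Real.exp (-C))))
          Filter.atTop (nhds (Real.log (1 - p))) :=
        ((Real.continuousAt_log hp1.ne').tendsto).comp hinner
      have htend : Filter.Tendsto (fun C : ℝ => Δ C 0 p) Filter.atTop
          (nhds (klBin 0 p)) := by
        rw [hkl]
        simpa [Δ] using hlog.neg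
      refine le_of_tendsto htend ?_
      filter_upwards [Filter.eventually_gt_atTop (0:ℝ)] with C hC
      exact le_csSup hbdd (hmem C hC)
    · rcases eq_or_lt_of_le hqp with hqp' | hqp'
      · -- q = p > 0 : take C → 0+
        subst hqp'
        have hq1 : q < 1 := lt_of_le_of_lt hqp hp
        have hkl : klBin q q = 0 := by
          rw [klBin, div_self hq0.ne', div_self (by linarith : (1:ℝ) - q ≠ 0),
            Real.log_one]
          ring
        have hcont : ContinuousAt (fun C : ℝ => Δ C q q) 0 := by
          have h1 : ContinuousAt (fun C : ℝ => 1 - q * (1 - Real.exp (-C))) 0 := by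
            fun_prop
          have h2 : ContinuousAt Real.log
              ((fun C : ℝ => 1 - q * (1 - Real.exp (-C))) 0) :=
            Real.continuousAt_log (by simp)
          have h3 : ContinuousAt (fun C : ℝ => Real.log (1 - q * (1 - Real.exp (-C)))) 0 :=
            ContinuousAt.comp (x := (0:ℝ)) (g := Real.log)
              (f := fun C : ℝ => 1 - q * (1 - Real.exp (-C))) h2 h1
          have h4 : ContinuousAt (fun C : ℝ =>
              -Real.log (1 - q * (1 - Real.exp (-C))) - C * q) 0 :=
            h3.neg.sub (by fun_prop)
          exact h4
        have hval : Δ 0 q q = 0 := by simp [Δ]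
        have htend : Filter.Tendsto (fun C : ℝ => Δ C q q)
            (nhdsWithin 0 (Set.Ioi 0)) (nhds 0) := by
          have := hcont.tendsto.mono_left
            (nhdsWithin_le_nhds (s := Set.Ioi (0:ℝ)))
          rwa [hval] at this
        rw [hkl]
        refine le_of_tendsto htend ?_
        filter_upwards [self_mem_nhdsWithin] with C hC
        exact le_csSup hbdd (hmem C hC)
      · obtain ⟨C, hC, hΔ⟩ := delta_attain q p hq0 hqp' hp
        exact hΔ ▸ le_csSup hbdd (hmem C hC)
  linarith
end

section
/- For 0 ≤ q < 1 and fixed 0 < p < 1 with q ≤ p, the function C ↦ Δ(C, q, p) = -ln(1 - p(1 - e^{-C})) - C·q is concave in C on (0, ∞), and attains its maximum at C₀ = -ln((q p - p)/(q p - q)) = ln(p(1-q)/(q(1-p))) when 0 < q < p, with Δ(C₀, q, p) = kl(q‖p). -/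
/-!
Writing `1 - p (1 - e^{-C}) = (1 - p) + p e^{-C}`, the derivative of `Δ(·, q, p)` is
`p e^{-C} / ((1 - p) + p e^{-C}) - q`, which is antitone in `C`; hence `Δ` is concave on all
of `ℝ`. At `C₀` one has `e^{-C₀} = q(1-p)/(p(1-q))` and `(1 - p) + p e^{-C₀} = (1-p)/(1-q)`, so
the derivative vanishes there, `C₀` is a global maximum, and expanding the logarithms gives
`Δ(C₀) = kl(q‖p)`.
-/

open Real Set

theorem ConcaveOn.isMaxOn_of_hasDerivAt_eq_zero {S : Set ℝ} {f : ℝ → ℝ} {x : ℝ}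
    (hf : ConcaveOn ℝ S f) (hx : x ∈ interior S) (hfx : HasDerivAt f 0 x) : IsMaxOn f S x := by
  have hmin : IsMinOn (-f) S x := by
    refine hf.neg.isMinOn_of_rightDeriv_eq_zero hx ?_
    simpa using hfx.neg.hasDerivWithinAt.derivWithin (uniqueDiffWithinAt_Ioi x)
  simpa using hmin.neg

section

variable {p : ℝ}

theorem one_sub_mul_one_sub_exp_neg_pos (hp0 : 0 ≤ p) (hp1 : p ≤ 1) (C : ℝ) :
    0 < 1 - p * (1 - exp (-C)) := by
  rcases hp0.eq_or_lt with rfl | hp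
  · norm_num
  · nlinarith [mul_pos hp (exp_pos (-C))]

theorem hasDerivAt_Δ (q : ℝ) (hp0 : 0 ≤ p) (hp1 : p ≤ 1) (C : ℝ) :
    HasDerivAt (fun C => Δ C q p) (p * exp (-C) / (1 - p * (1 - exp (-C))) - q) C := by
  have hexp : HasDerivAt (fun x => exp (-x)) (-exp (-C)) C := by
    simpa using (hasDerivAt_neg C).exp
  have hlog := (((hexp.const_sub 1).const_mul p).const_sub 1).log
    (one_sub_mul_one_sub_exp_neg_pos hp0 hp1 C).ne'
  exact (hlog.neg.sub (hasDerivAt_mul_const q)).congr_deriv (by ring)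

theorem antitone_mul_exp_neg_div (hp0 : 0 ≤ p) (hp1 : p ≤ 1) :
    Antitone fun C => p * exp (-C) / (1 - p * (1 - exp (-C))) := by
  intro a b hab
  have hexp : exp (-b) ≤ exp (-a) := exp_le_exp.2 (neg_le_neg hab)
  rw [div_le_div_iff₀ (one_sub_mul_one_sub_exp_neg_pos hp0 hp1 b)
    (one_sub_mul_one_sub_exp_neg_pos hp0 hp1 a)]
  -- after cross-multiplying, the difference of the two sides is `p (1 - p) (e^{-a} - e^{-b})`
  nlinarith [mul_nonneg (mul_nonneg hp0 (sub_nonneg.2 hp1)) (sub_nonneg.2 hexp)]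

theorem concaveOn_univ_Δ (q : ℝ) (hp0 : 0 ≤ p) (hp1 : p ≤ 1) :
    ConcaveOn ℝ univ fun C => Δ C q p := by
  have hderiv := hasDerivAt_Δ q hp0 hp1
  refine Antitone.concaveOn_univ_of_deriv (fun C => (hderiv C).differentiableAt) ?_
  intro a b hab
  rw [(hderiv a).deriv, (hderiv b).deriv]
  exact sub_le_sub_right (antitone_mul_exp_neg_div hp0 hp1 hab) q

end

section

variable {q p : ℝ}

theorem exp_neg_log_odds_ratio (hq0 : 0 < q) (hq1 : q < 1) (hp0 : 0 < p) (hp1 : p < 1) :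
    exp (-log (p * (1 - q) / (q * (1 - p)))) = q * (1 - p) / (p * (1 - q)) := by
  have hq1' : 0 < 1 - q := sub_pos.2 hq1
  have hp1' : 0 < 1 - p := sub_pos.2 hp1
  rw [exp_neg, exp_log (by positivity), inv_div]

theorem one_sub_mul_one_sub_exp_neg_log_odds_ratio (hq0 : 0 < q) (hq1 : q < 1) (hp0 : 0 < p)
    (hp1 : p < 1) :
    1 - p * (1 - exp (-log (p * (1 - q) / (q * (1 - p))))) = (1 - p) / (1 - q) := by
  have hq1' : 1 - q ≠ 0 := (sub_pos.2 hq1).ne'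
  rw [exp_neg_log_odds_ratio hq0 hq1 hp0 hp1]
  field_simp
  ring

theorem hasDerivAt_Δ_log_odds_ratio (hq0 : 0 < q) (hq1 : q < 1) (hp0 : 0 < p) (hp1 : p < 1) :
    HasDerivAt (fun C => Δ C q p) 0 (log (p * (1 - q) / (q * (1 - p)))) := by
  have hq1' : 1 - q ≠ 0 := (sub_pos.2 hq1).ne'
  have hp1' : 1 - p ≠ 0 := (sub_pos.2 hp1).ne'
  refine (hasDerivAt_Δ q hp0.le hp1.le _).congr_deriv ?_
  rw [one_sub_mul_one_sub_exp_neg_log_odds_ratio hq0 hq1 hp0 hp1,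
    exp_neg_log_odds_ratio hq0 hq1 hp0 hp1]
  field_simp
  ring

theorem Δ_log_odds_ratio (hq0 : 0 < q) (hq1 : q < 1) (hp0 : 0 < p) (hp1 : p < 1) :
    Δ (log (p * (1 - q) / (q * (1 - p)))) q p = klBin q p := by
  have hq1' : 1 - q ≠ 0 := (sub_pos.2 hq1).ne'
  have hp1' : 1 - p ≠ 0 := (sub_pos.2 hp1).ne'
  rw [Δ, one_sub_mul_one_sub_exp_neg_log_odds_ratio hq0 hq1 hp0 hp1, klBin,
    log_div hp1' hq1', log_div (mul_ne_zero hp0.ne' hq1') (mul_ne_zero hq0.ne' hp1'),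
    log_mul hp0.ne' hq1', log_mul hq0.ne' hp1', log_div hq0.ne' hp0.ne', log_div hq1' hp1']
  ring

end

theorem statement3_general (q p : ℝ) (hq1 : q < 1)
    (hp0 : 0 < p) (hp1 : p < 1) :
    ConcaveOn ℝ (Set.Ioi (0 : ℝ)) (fun C => Δ C q p) ∧
    (0 < q → q < p →
      IsMaxOn (fun C => Δ C q p) (Set.Ioi (0 : ℝ))
          (Real.log (p * (1 - q) / (q * (1 - p)))) ∧
        Δ (Real.log (p * (1 - q) / (q * (1 - p)))) q p = klBin q p) := by
  have hconcave := concaveOn_univ_Δ q hp0.le hp1.le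
  refine ⟨hconcave.subset (subset_univ _) (convex_Ioi 0), fun hq0 _ => ⟨?_, ?_⟩⟩
  · have hmax := hconcave.isMaxOn_of_hasDerivAt_eq_zero (by simp)
      (hasDerivAt_Δ_log_odds_ratio hq0 hq1 hp0 hp1)
    exact hmax.on_subset (subset_univ _)
  · exact Δ_log_odds_ratio hq0 hq1 hp0 hp1

/-- For `0 ≤ q < 1`, `0 < p < 1`, `q ≤ p`: `C ↦ Δ(C,q,p)` is concave on `(0,∞)`,
and when `0 < q < p` it attains its maximum on `(0,∞)` at
`C₀ = ln(p(1-q)/(q(1-p)))`, with value `kl(q‖p)`. -/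
theorem statement3 (q p : ℝ) (hq0 : 0 ≤ q) (hq1 : q < 1)
    (hp0 : 0 < p) (hp1 : p < 1) (hqp : q ≤ p) :
    ConcaveOn ℝ (Set.Ioi (0 : ℝ)) (fun C => Δ C q p) ∧
    (0 < q → q < p →
      IsMaxOn (fun C => Δ C q p) (Set.Ioi (0 : ℝ))
          (Real.log (p * (1 - q) / (q * (1 - p)))) ∧
        Δ (Real.log (p * (1 - q) / (q * (1 - p)))) q p = klBin q p) :=
  statement3_general q p hq1 hp0 hp1
end

section
/- Let x ∈ R^{d₀} be nonzero, W₁ ∈ R^{d₁×d₀}, w₂ ∈ R^{d₁}. If the parameters of a one-hidden-layer sign network f_{(V₁,v₂)}(x) = sgn(v₂ · sgn(V₁ x)) are drawn from independent Gaussians V₁ ~ N(W₁, I) (rows independent) and v₂ ~ N(w₂, I), then E[f] = ∑_{s ∈ {-1,1}^{d₁}} Erf(w₂·s / √(2 d₁)) · ∏_{i=1}^{d₁} (1/2 + (s_i/2) Erf(w₁ⁱ·x / (√2 ‖x‖))), where w₁ⁱ is the i-th row of W₁. -/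
/-!
Conditionally on `V₁`, the hidden signs `σ = sgn (V₁ x)` are a fixed vector in `{-1, 1}^{d₁}` and
`v₂ ⬝ σ ~ N(w₂ ⬝ σ, d₁)`; since `E[sgn Y] = Erf (μ / √(2v))` for `Y ~ N(μ, v)`, the inner
expectation is `Erf (w₂ ⬝ σ / √(2 d₁))`. Writing this function of `σ` as a sum over the sign
patterns `s` weighted by the indicator `∏ᵢ (1 + sᵢ σᵢ) / 2` and using the independence of the
rows of `V₁`, each factor has expectation `1/2 + sᵢ/2 · E[sgn (v₁ⁱ ⬝ x)]`, where
`v₁ⁱ ⬝ x ~ N(w₁ⁱ ⬝ x, ‖x‖²)`.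
-/

open MeasureTheory ProbabilityTheory

noncomputable def sgn (a : ℝ) : ℝ := if 0 < a then 1 else -1

noncomputable def Erf (z : ℝ) : ℝ :=
  (2 / Real.sqrt Real.pi) * ∫ t in (0:ℝ)..z, Real.exp (-t ^ 2)

open Real Set
open scoped NNReal

@[fun_prop]
lemma measurable_sgn : Measurable sgn :=
  Measurable.ite measurableSet_Ioi measurable_const measurable_const

lemma sgn_eq_one_or_eq_neg_one (a : ℝ) : sgn a = 1 ∨ sgn a = -1 := by
  unfold sgn; split_ifs <;> simp

lemma abs_sgn (a : ℝ) : |sgn a| = 1 := by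
  unfold sgn; split_ifs <;> norm_num

lemma sgn_mul_of_pos {c : ℝ} (hc : 0 < c) (a : ℝ) : sgn (c * a) = sgn a := by
  simp only [sgn, mul_pos_iff_of_pos_left hc]

lemma integrable_sgn_comp {α : Type*} [MeasurableSpace α] {μ : Measure α} [IsFiniteMeasure μ]
    {g : α → ℝ} (hg : Measurable g) : Integrable (fun y => sgn (g y)) μ :=
  Integrable.of_bound (measurable_sgn.comp hg).aestronglyMeasurable 1
    (ae_of_all _ fun y => by simp [abs_sgn])

lemma integral_exp_neg_sq_symmetric_interval (b : ℝ) :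
    ∫ t in -b..b, exp (-t ^ 2) = 2 * ∫ t in 0..b, exp (-t ^ 2) := by
  have hint (a c : ℝ) : IntervalIntegrable (fun t => exp (-t ^ 2)) volume a c :=
    (by fun_prop : Continuous fun t : ℝ => exp (-t ^ 2)).intervalIntegrable a c
  have hneg : ∫ t in -b..0, exp (-t ^ 2) = ∫ t in 0..b, exp (-t ^ 2) := by
    have h := intervalIntegral.integral_comp_neg (a := 0) (b := b) (fun t => exp (-t ^ 2))
    simp only [neg_sq, neg_zero] at h
    exact h.symm
  rw [← intervalIntegral.integral_add_adjacent_intervals (hint _ 0) (hint 0 _), hneg]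
  ring

lemma integral_sgn_add_mul_exp_neg_sq (b : ℝ) :
    ∫ t, sgn (t + b) * exp (-t ^ 2) = √π * Erf b := by
  have hg : Integrable fun t : ℝ => exp (-t ^ 2) := by
    simpa using integrable_exp_neg_mul_sq one_pos
  -- split at `-b`; reflecting the negative part onto `Ioi b` leaves `∫ t in -b..b, exp (-t ^ 2)`
  have hpos : ∫ t in Ioi (-b), sgn (t + b) * exp (-t ^ 2) = ∫ t in Ioi (-b), exp (-t ^ 2) :=
    setIntegral_congr_fun measurableSet_Ioi fun t ht => by
      simp [sgn, show 0 < t + b by simp only [mem_Ioi] at ht; linarith]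
  have hneg : ∫ t in Iic (-b), sgn (t + b) * exp (-t ^ 2) = -∫ t in Ioi b, exp (-t ^ 2) := by
    rw [← integral_neg, ← integral_comp_neg_Ioi]
    refine setIntegral_congr_fun measurableSet_Ioi fun t ht => ?_
    simp [sgn, show ¬ 0 < -t + b by simp only [mem_Ioi] at ht; linarith]
  have hf : Integrable fun t : ℝ => sgn (t + b) * exp (-t ^ 2) :=
    hg.mono' (by fun_prop) (ae_of_all _ fun t => by simp [abs_sgn])
  rw [← intervalIntegral.integral_Iic_add_Ioi (b := -b) hf.integrableOn hf.integrableOn, hpos,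
    hneg, neg_add_eq_sub, intervalIntegral.integral_Ioi_sub_Ioi' hg.integrableOn hg.integrableOn,
    integral_exp_neg_sq_symmetric_interval, Erf]
  field_simp

lemma integral_sgn_gaussianReal (μ : ℝ) {v : ℝ≥0} (hv : v ≠ 0) :
    ∫ y, sgn y ∂gaussianReal μ v = Erf (μ / √(2 * v)) := by
  -- the substitution `y = c t + μ` turns the density into `exp (-t ^ 2) / √π`
  set c := √(2 * v) with hc_def
  have hc : 0 < c := by positivity
  have hpdf (t : ℝ) : gaussianPDFReal μ v (c * t + μ) = (√(2 * π * v))⁻¹ * exp (-t ^ 2) := by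
    rw [gaussianPDFReal, add_sub_cancel_right, mul_pow, hc_def, sq_sqrt (by positivity)]
    field_simp
  have hnorm : c * (√(2 * π * v))⁻¹ = (√π)⁻¹ := by
    rw [hc_def, show (2 : ℝ) * π * v = π * (2 * v) by ring, sqrt_mul Real.pi_pos.le]
    field_simp
  have hsubst : ∫ y, gaussianPDFReal μ v y • sgn y
      = c * ∫ t, gaussianPDFReal μ v (c * t + μ) • sgn (c * t + μ) := by
    rw [Measure.integral_comp_mul_left (fun y => gaussianPDFReal μ v (y + μ) • sgn (y + μ)),
      integral_add_right_eq_self (fun y => gaussianPDFReal μ v y • sgn y), abs_inv,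
      abs_of_pos hc, smul_eq_mul, ← mul_assoc, mul_inv_cancel₀ hc.ne', one_mul]
  have hsgn (t : ℝ) : sgn (c * t + μ) = sgn (t + μ / c) := by
    rw [← sgn_mul_of_pos hc (t + μ / c), mul_add, mul_div_cancel₀ _ hc.ne']
  rw [integral_gaussianReal_eq_integral_smul hv, hsubst]
  simp only [hpdf, hsgn, smul_eq_mul]
  calc c * ∫ t, (√(2 * π * v))⁻¹ * exp (-t ^ 2) * sgn (t + μ / c)
      = (√π)⁻¹ * ∫ t, sgn (t + μ / c) * exp (-t ^ 2) := by
        rw [← hnorm, ← integral_const_mul, ← integral_const_mul]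
        exact integral_congr_ae (ae_of_all _ fun t => by ring)
    _ = Erf (μ / c) := by
        rw [integral_sgn_add_mul_exp_neg_sq, ← mul_assoc,
          inv_mul_cancel₀ (sqrt_pos.2 Real.pi_pos).ne', one_mul]

lemma map_sum_mul_pi_gaussianReal {ι : Type*} [Fintype ι] (w x : ι → ℝ) (v : ι → ℝ≥0) :
    (Measure.pi fun j => gaussianReal (w j) (v j)).map (fun y => ∑ j, y j * x j)
      = gaussianReal (∑ j, w j * x j) (∑ j, ‖x j‖₊ ^ 2 * v j) := by
  have hsplit : (fun y : ι → ℝ => ∑ j, y j * x j)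
      = (fun p : ι → ℝ => ∑ j, p j) ∘ fun y j => y j * x j := rfl
  rw [hsplit, ← Measure.map_map (by fun_prop) (by fun_prop),
    Measure.pi_map_pi fun j => (measurable_mul_const (x j)).aemeasurable]
  simp_rw [gaussianReal_map_mul_const]
  refine Measure.ext_of_charFun (funext fun t => ?_)
  rw [charFun_map_sum_pi_eq_prod, Finset.prod_apply]
  simp only [charFun_gaussianReal, ← Complex.exp_sum]
  congr 1
  push_cast
  simp only [Finset.sum_mul, ← Finset.sum_sub_distrib, Finset.mul_sum, Finset.sum_div]
  refine Finset.sum_congr rfl fun j _ => ?_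
  have hsq : ((‖x j‖ : ℝ) : ℂ) ^ 2 = (x j : ℂ) ^ 2 := by
    rw [← Complex.ofReal_pow, Real.norm_eq_abs, sq_abs, Complex.ofReal_pow]
  push_cast [hsq]
  ring

lemma integral_sgn_sum_mul_pi_gaussianReal {ι : Type*} [Fintype ι] (w x : ι → ℝ)
    (v : ι → ℝ≥0) (hv : ∑ j, ‖x j‖₊ ^ 2 * v j ≠ 0) :
    ∫ y, sgn (∑ j, y j * x j) ∂(Measure.pi fun j => gaussianReal (w j) (v j))
      = Erf ((∑ j, w j * x j) / √(2 * ↑(∑ j, ‖x j‖₊ ^ 2 * v j))) := by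
  rw [← integral_map (by fun_prop : Measurable _).aemeasurable (by fun_prop),
    map_sum_mul_pi_gaussianReal, integral_sgn_gaussianReal _ hv]

lemma integral_sgn_sum_mul_sign_pi_gaussianReal {ι : Type*} [Fintype ι] [Nonempty ι]
    (w σ : ι → ℝ) (hσ : ∀ i, σ i = 1 ∨ σ i = -1) :
    ∫ y, sgn (∑ i, y i * σ i) ∂(Measure.pi fun i => gaussianReal (w i) 1)
      = Erf ((∑ i, w i * σ i) / √(2 * Fintype.card ι)) := by
  have hnorm (i : ι) : ‖σ i‖₊ ^ 2 * 1 = 1 := by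
    rcases hσ i with h | h <;> simp [h]
  have hvar : ∑ i, ‖σ i‖₊ ^ 2 * 1 = (Fintype.card ι : ℝ≥0) := by
    simp only [hnorm, Finset.sum_const, Finset.card_univ, nsmul_eq_mul, mul_one]
  rw [integral_sgn_sum_mul_pi_gaussianReal w σ (fun _ => 1)
      (by rw [hvar]; exact_mod_cast Fintype.card_ne_zero), hvar, NNReal.coe_natCast]

lemma integral_half_add_mul_sgn_pi_gaussianReal {κ : Type*} [Fintype κ] (w x : κ → ℝ)
    (hx : x ≠ 0) (s : ℝ) :
    ∫ r, (1 / 2 + s / 2 * sgn (∑ j, r j * x j)) ∂(Measure.pi fun j => gaussianReal (w j) 1)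
      = 1 / 2 + s / 2 * Erf ((∑ j, w j * x j) / (√2 * √(∑ j, x j ^ 2))) := by
  have hvar : ((∑ j, ‖x j‖₊ ^ 2 * 1 : ℝ≥0) : ℝ) = ∑ j, x j ^ 2 := by
    push_cast
    simp [sq_abs]
  have hpos : 0 < ∑ j, x j ^ 2 := by
    obtain ⟨j, hj⟩ := Function.ne_iff.1 hx
    exact Finset.sum_pos' (fun i _ => sq_nonneg _) ⟨j, Finset.mem_univ j, sq_pos_of_ne_zero hj⟩
  rw [integral_add (integrable_const _) ((integrable_sgn_comp (by fun_prop)).const_mul _),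
    integral_const, integral_const_mul, integral_sgn_sum_mul_pi_gaussianReal w x (fun _ => 1)
      (by rw [← NNReal.coe_ne_zero, hvar]; exact hpos.ne'), hvar, sqrt_mul zero_le_two]
  simp

lemma integrable_prod_half_add_mul_sgn {ι κ : Type*} [Fintype ι] [Fintype κ]
    (μ : ι → Measure (κ → ℝ)) [∀ i, IsProbabilityMeasure (μ i)] (x : κ → ℝ) (s : ι → ℝ) :
    Integrable (fun V : ι → κ → ℝ => ∏ i, (1 / 2 + s i / 2 * sgn (∑ j, V i j * x j)))
      (Measure.pi μ) := by
  have hrow (i : ι) :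
      Integrable (fun r : κ → ℝ => 1 / 2 + s i / 2 * sgn (∑ j, r j * x j)) (μ i) :=
    (integrable_const _).fun_add ((integrable_sgn_comp (by fun_prop)).const_mul _)
  exact Integrable.fintype_prod hrow

lemma integral_prod_half_add_mul_sgn_pi_gaussianReal {ι κ : Type*} [Fintype ι] [Fintype κ]
    (W : ι → κ → ℝ) (x : κ → ℝ) (hx : x ≠ 0) (s : ι → ℝ) :
    ∫ V, ∏ i, (1 / 2 + s i / 2 * sgn (∑ j, V i j * x j))
        ∂(Measure.pi fun i => Measure.pi fun j => gaussianReal (W i j) 1)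
      = ∏ i, (1 / 2 + s i / 2 * Erf ((∑ j, W i j * x j) / (√2 * √(∑ j, x j ^ 2)))) := by
  rw [integral_fintype_prod_eq_prod (fun i (r : κ → ℝ) => 1 / 2 + s i / 2 * sgn (∑ j, r j * x j))]
  exact Finset.prod_congr rfl fun i _ => integral_half_add_mul_sgn_pi_gaussianReal (W i) x hx (s i)

lemma half_add_half_mul_eq_ite {a b : ℝ} (ha : a = 1 ∨ a = -1) (hb : b = 1 ∨ b = -1) :
    1 / 2 + a / 2 * b = if a = b then 1 else 0 := by
  rcases ha with rfl | rfl <;> rcases hb with rfl | rfl <;> norm_num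

lemma eq_sum_piFinset_mul_prod {ι : Type*} [Fintype ι] [DecidableEq ι] (f : (ι → ℝ) → ℝ)
    {σ : ι → ℝ} (hσ : ∀ i, σ i = 1 ∨ σ i = -1) :
    f σ = ∑ s ∈ Fintype.piFinset (fun _ : ι => ({-1, 1} : Finset ℝ)),
      f s * ∏ i, (1 / 2 + s i / 2 * σ i) := by
  have hmem {s : ι → ℝ} : s ∈ Fintype.piFinset (fun _ : ι => ({-1, 1} : Finset ℝ)) ↔
      ∀ i, s i = 1 ∨ s i = -1 := by
    simp only [Fintype.mem_piFinset, Finset.mem_insert, Finset.mem_singleton, or_comm]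
  have hprod : ∀ s ∈ Fintype.piFinset (fun _ : ι => ({-1, 1} : Finset ℝ)),
      f s * ∏ i, (1 / 2 + s i / 2 * σ i) = if σ = s then f s else 0 := by
    intro s hs
    rw [Finset.prod_congr rfl fun i _ => half_add_half_mul_eq_ite (hmem.1 hs i) (hσ i),
      Finset.prod_boole]
    simp [funext_iff, eq_comm]
  rw [Finset.sum_congr rfl hprod, Finset.sum_ite_eq, if_pos (hmem.2 hσ)]

theorem statement13_general (d₀ d₁ : ℕ) (hd₁ : 1 ≤ d₁)
    (x : Fin d₀ → ℝ) (hx : x ≠ 0)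
    (W₁ : Fin d₁ → Fin d₀ → ℝ) (w₂ : Fin d₁ → ℝ) :
    ∫ Vv : (Fin d₁ → Fin d₀ → ℝ) × (Fin d₁ → ℝ),
        sgn (∑ i, Vv.2 i * sgn (∑ j, Vv.1 i j * x j))
      ∂(Measure.prod
          (Measure.pi fun i => Measure.pi fun j => gaussianReal (W₁ i j) 1)
          (Measure.pi fun i => gaussianReal (w₂ i) 1))
      = ∑ s ∈ Fintype.piFinset (fun _ : Fin d₁ => ({-1, 1} : Finset ℝ)),
          Erf ((∑ i, w₂ i * s i) / Real.sqrt (2 * d₁)) *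
            ∏ i, (1 / 2 + s i / 2 *
              Erf ((∑ j, W₁ i j * x j) /
                (Real.sqrt 2 * Real.sqrt (∑ j, x j ^ 2)))) := by
  have : Nonempty (Fin d₁) := ⟨⟨0, hd₁⟩⟩
  have hinner (V : Fin d₁ → Fin d₀ → ℝ) :
      ∫ v, sgn (∑ i, v i * sgn (∑ j, V i j * x j)) ∂(Measure.pi fun i => gaussianReal (w₂ i) 1)
        = ∑ s ∈ Fintype.piFinset (fun _ : Fin d₁ => ({-1, 1} : Finset ℝ)),
            Erf ((∑ i, w₂ i * s i) / √(2 * d₁)) *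
              ∏ i, (1 / 2 + s i / 2 * sgn (∑ j, V i j * x j)) := by
    rw [integral_sgn_sum_mul_sign_pi_gaussianReal w₂ _ fun i => sgn_eq_one_or_eq_neg_one _,
      Fintype.card_fin]
    exact eq_sum_piFinset_mul_prod (fun s => Erf ((∑ i, w₂ i * s i) / √(2 * d₁)))
      fun i => sgn_eq_one_or_eq_neg_one _
  rw [integral_prod _ (integrable_sgn_comp (by fun_prop)), integral_congr_ae (ae_of_all _ hinner),
    integral_finsetSum _ fun s _ => (integrable_prod_half_add_mul_sgn _ x s).const_mul _]
  refine Finset.sum_congr rfl fun s _ => ?_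
  rw [integral_const_mul, integral_prod_half_add_mul_sgn_pi_gaussianReal W₁ x hx]

/-- Expectation of the one-hidden-layer sign network
`f_{(V₁,v₂)}(x) = sgn(v₂ ⬝ sgn(V₁ x))` under independent Gaussians
`V₁ ~ N(W₁, I)`, `v₂ ~ N(w₂, I)`. -/
theorem statement13 (d₀ d₁ : ℕ) (hd₀ : 1 ≤ d₀) (hd₁ : 1 ≤ d₁)
    (x : Fin d₀ → ℝ) (hx : x ≠ 0)
    (W₁ : Fin d₁ → Fin d₀ → ℝ) (w₂ : Fin d₁ → ℝ) :
    ∫ Vv : (Fin d₁ → Fin d₀ → ℝ) × (Fin d₁ → ℝ),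
        sgn (∑ i, Vv.2 i * sgn (∑ j, Vv.1 i j * x j))
      ∂(Measure.prod
          (Measure.pi fun i => Measure.pi fun j => gaussianReal (W₁ i j) 1)
          (Measure.pi fun i => gaussianReal (w₂ i) 1))
      = ∑ s ∈ Fintype.piFinset (fun _ : Fin d₁ => ({-1, 1} : Finset ℝ)),
          Erf ((∑ i, w₂ i * s i) / Real.sqrt (2 * d₁)) *
            ∏ i, (1 / 2 + s i / 2 *
              Erf ((∑ j, W₁ i j * x j) /
                (Real.sqrt 2 * Real.sqrt (∑ j, x j ^ 2)))) :=
  statement13_general d₀ d₁ hd₁ x hx W₁ w₂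
end
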